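/- A simple connected graph Γ has adjacency matrix rank 3 over ℝ if and only if Γ is obtained from K_3 by multiplication of vertices, i.e., Γ is a complete tripartite graph K_{a,b,c} with a, b, c ≥ 1. -/

import Mathlib

/-!
Let `A` be the adjacency matrix. Choose vertices `s₀, s₁, s₂` whose rows form a basis of the row
space; since `A` is symmetric, the principal submatrix on them is nonsingular. A symmetric 0/1
matrix with zero diagonal of size 3 has determinant `2abc`, so the `sᵢ` span a triangle. Expanding
any other row in this basis and reading it on the columns `sᵢ` and on its own (zero) diagonal entry
forces it to be zero, which connectivity excludes, or to equal one of the three basis rows. Hence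
the vertices split into the twin classes of `s₀, s₁, s₂`, adjacent exactly across classes.
Conversely, the adjacency matrix of `K_{a,b,c}` is a blow-up of that of `K₃`, which it contains as
a principal submatrix and whose determinant is `2`.
-/

open SimpleGraph Matrix Submodule

namespace Matrix

variable {K m n ι : Type*} [Field K]

lemma exists_linearIndependent_rows_spanning [Finite m] [Fintype n] {A : Matrix m n K} {k : ℕ}
    (hk : A.rank = k) :
    ∃ s : Fin k → m, LinearIndependent K (A.row ∘ s) ∧
      ∀ u, A.row u ∈ span K (Set.range (A.row ∘ s)) := by
  obtain ⟨κ, a, ha, hspan, hli⟩ := exists_linearIndependent' K A.row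
  have : Fintype κ := have := Finite.of_injective a ha; Fintype.ofFinite κ
  have hcard : Fintype.card κ = k := by
    rw [← hk, rank_eq_finrank_span_row, ← hspan, finrank_span_eq_card hli]
  let e := Fintype.equivFinOfCardEq hcard
  refine ⟨a ∘ e.symm, hli.comp e.symm e.symm.injective, fun u => ?_⟩
  rw [← Function.comp_assoc, e.symm.surjective.range_comp, hspan]
  exact subset_span (Set.mem_range_self u)

lemma IsSymm.linearIndependent_rows_submatrix [Fintype ι] {A : Matrix n n K} (hA : A.IsSymm)
    {s : ι → n} (hli : LinearIndependent K (A.row ∘ s))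
    (hspan : ∀ u, A.row u ∈ span K (Set.range (A.row ∘ s))) :
    LinearIndependent K (A.submatrix s s).row := by
  rw [Fintype.linearIndependent_iff] at hli ⊢
  intro c hc
  have hc' : ∀ j, ∑ i, c i * A (s i) (s j) = 0 := fun j => by simpa using congrFun hc j
  refine hli c (funext fun u => ?_)
  obtain ⟨α, hα⟩ := (mem_span_range_iff_exists_fun K).mp (hspan u)
  have hα' : ∀ w, A u w = ∑ j, α j * A (s j) w := fun w => by simpa using (congrFun hα w).symm
  calc (∑ i, c i • (A.row ∘ s) i) u = ∑ i, c i * A u (s i) := by simp [hA.apply]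
    _ = ∑ i, c i * ∑ j, α j * A (s i) (s j) := by simp only [hα', hA.apply (s _) (s _)]
    _ = ∑ j, α j * ∑ i, c i * A (s i) (s j) := by
      simp_rw [Finset.mul_sum]
      rw [Finset.sum_comm]
      simp only [mul_left_comm]
    _ = 0 := by simp [hc']

end Matrix

namespace SimpleGraph

variable {V ι : Type*} {G : SimpleGraph V}

section AdjMatrix

variable [DecidableRel G.Adj]

lemma adj_iff_ne_of_det_submatrix_adjMatrix_ne_zero {R : Type*} [CommRing R] {s : Fin 3 → V}
    (hdet : ((G.adjMatrix R).submatrix s s).det ≠ 0) (i j : Fin 3) :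
    G.Adj (s i) (s j) ↔ i ≠ j := by
  have hsymm := (isSymm_adjMatrix (α := R) G).apply
  have hdet_eq : ((G.adjMatrix R).submatrix s s).det =
      2 * G.adjMatrix R (s 0) (s 1) * G.adjMatrix R (s 0) (s 2) * G.adjMatrix R (s 1) (s 2) := by
    rw [det_fin_three]
    simp only [submatrix_apply, hsymm (s 0) (s 1), hsymm (s 0) (s 2), hsymm (s 1) (s 2),
      adjMatrix_apply, G.loopless.irrefl, if_false]
    ring
  rw [hdet_eq] at hdet
  have hadj {v w : V} (h : G.adjMatrix R v w ≠ 0) : G.Adj v w := by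
    by_contra hvw; simp [hvw] at h
  have h12 := hadj (right_ne_zero_of_mul hdet)
  have h02 := hadj (right_ne_zero_of_mul (left_ne_zero_of_mul hdet))
  have h01 := hadj (right_ne_zero_of_mul (left_ne_zero_of_mul (left_ne_zero_of_mul hdet)))
  refine ⟨fun h hij => G.loopless.irrefl _ (hij ▸ h), fun hij => ?_⟩
  fin_cases i <;> fin_cases j <;> simp_all [h01.symm, h02.symm, h12.symm]

lemma neighborSet_eq_of_row_eq {R : Type*} [Zero R] [One R] [NeZero (1 : R)] {u v : V}
    (h : G.adjMatrix R u = G.adjMatrix R v) : G.neighborSet u = G.neighborSet v := by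
  ext w
  have := congrFun h w
  by_cases hu : G.Adj u w <;> by_cases hv : G.Adj v w <;> simp_all

lemma exists_neighborSet_eq_of_mem_span_rows {s : Fin 3 → V}
    (hs : ∀ i j, G.Adj (s i) (s j) ↔ i ≠ j) {u : V}
    (hu : (G.adjMatrix ℝ).row u ∈ span ℝ (Set.range ((G.adjMatrix ℝ).row ∘ s)))
    (hdeg : ∃ w, G.Adj u w) : ∃ i, G.neighborSet u = G.neighborSet (s i) := by
  obtain ⟨c, hc⟩ := (mem_span_range_iff_exists_fun ℝ).mp hu
  have hrow : ∀ w, G.adjMatrix ℝ u w = c 0 * G.adjMatrix ℝ (s 0) w +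
      c 1 * G.adjMatrix ℝ (s 1) w + c 2 * G.adjMatrix ℝ (s 2) w :=
    fun w => by simpa [Fin.sum_univ_three] using (congrFun hc w).symm
  have hsymm := (isSymm_adjMatrix (α := ℝ) G).apply
  have e0 : G.adjMatrix ℝ u (s 0) = c 1 + c 2 := by rw [hrow]; simp [adjMatrix_apply, hs]
  have e1 : G.adjMatrix ℝ u (s 1) = c 0 + c 2 := by rw [hrow]; simp [adjMatrix_apply, hs]
  have e2 : G.adjMatrix ℝ u (s 2) = c 0 + c 1 := by rw [hrow]; simp [adjMatrix_apply, hs]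
  have eu : 0 = c 0 * G.adjMatrix ℝ u (s 0) + c 1 * G.adjMatrix ℝ u (s 1) +
      c 2 * G.adjMatrix ℝ u (s 2) := by
    rw [← hsymm u, ← hsymm u, ← hsymm u, ← hrow]; simp
  have hbasis (i : Fin 3) (hci : ∀ j, c j = if j = i then 1 else 0) :
      ∃ i, G.neighborSet u = G.neighborSet (s i) :=
    ⟨i, neighborSet_eq_of_row_eq (R := ℝ) <| funext fun w => by
      rw [hrow w, hci 0, hci 1, hci 2]; fin_cases i <;> simp⟩
  -- In each of the eight adjacency patterns of `u` to the triangle these equations are linear in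
  -- `c`; they force `c = 0` or `c` a standard basis vector.
  by_cases h0 : G.Adj u (s 0) <;> by_cases h1 : G.Adj u (s 1) <;> by_cases h2 : G.Adj u (s 2) <;>
    simp only [adjMatrix_apply, h0, h1, h2, if_true, if_false] at e0 e1 e2 eu
  · exfalso; linarith
  · exact hbasis 2 fun j => by fin_cases j <;> simp <;> linarith
  · exact hbasis 1 fun j => by fin_cases j <;> simp <;> linarith
  · exfalso; linarith
  · exact hbasis 0 fun j => by fin_cases j <;> simp <;> linarith
  · exfalso; linarith
  · exfalso; linarith
  · obtain ⟨w, hw⟩ := hdeg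
    have := hrow w
    rw [show c 0 = 0 by linarith, show c 1 = 0 by linarith, show c 2 = 0 by linarith] at this
    simp [adjMatrix_apply, hw] at this

end AdjMatrix

lemma leftInverse_of_neighborSet_eq {s : ι → V} (hs : ∀ i j, G.Adj (s i) (s j) ↔ i ≠ j)
    {f : V → ι} (hf : ∀ u, G.neighborSet u = G.neighborSet (s (f u))) :
    Function.LeftInverse f s := by
  intro i
  by_contra h
  have hmem : s (f (s i)) ∈ G.neighborSet (s i) := (hs _ _).2 (Ne.symm h)
  rw [hf] at hmem
  exact G.loopless.irrefl _ hmem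

lemma adj_iff_ne_of_neighborSet_eq {s : ι → V} (hs : ∀ i j, G.Adj (s i) (s j) ↔ i ≠ j)
    {f : V → ι} (hf : ∀ u, G.neighborSet u = G.neighborSet (s (f u))) (u w : V) :
    G.Adj u w ↔ f u ≠ f w :=
  calc G.Adj u w ↔ G.Adj (s (f u)) w := Set.ext_iff.mp (hf u) w
    _ ↔ G.Adj (s (f w)) (s (f u)) := by rw [adj_comm]; exact Set.ext_iff.mp (hf w) _
    _ ↔ f u ≠ f w := by rw [hs, ne_comm]

def completeMultipartiteGraph.congrRight {P Q : ι → Type*} (e : ∀ i, P i ≃ Q i) :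
    completeMultipartiteGraph P ≃g completeMultipartiteGraph Q where
  toEquiv := Equiv.sigmaCongrRight e
  map_rel_iff' := Iff.rfl

def isoCompleteMultipartiteGraphFibers {f : V → ι} (hf : ∀ u w, G.Adj u w ↔ f u ≠ f w) :
    G ≃g completeMultipartiteGraph fun i => {v // f v = i} where
  toEquiv := (Equiv.sigmaFiberEquiv f).symm
  map_rel_iff' {u w} := (hf u w).symm

lemma exists_iso_completeMultipartiteGraph_fin [Fintype V] {f : V → ι}
    (hsurj : Function.Surjective f) (hf : ∀ u w, G.Adj u w ↔ f u ≠ f w) :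
    ∃ a : ι → ℕ, (∀ i, 0 < a i) ∧ Nonempty (G ≃g completeMultipartiteGraph fun i => Fin (a i)) := by
  classical
  exact ⟨fun i => Fintype.card {v // f v = i},
    fun i => Fintype.card_pos_iff.mpr (let ⟨v, hv⟩ := hsurj i; ⟨⟨v, hv⟩⟩),
    ⟨(isoCompleteMultipartiteGraphFibers hf).trans
      (completeMultipartiteGraph.congrRight fun i => Fintype.equivFin _)⟩⟩

lemma Iso.rank_adjMatrix_eq {W R : Type*} [Fintype V] [Fintype W] [CommRing R]
    {H : SimpleGraph W} [DecidableRel G.Adj] [DecidableRel H.Adj] (e : G ≃g H) :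
    (G.adjMatrix R).rank = (H.adjMatrix R).rank := by
  rw [← e.reindex_adjMatrix R, rank_reindex]

lemma adjMatrix_completeMultipartiteGraph {R : Type*} [Zero R] [One R] [DecidableEq ι]
    (P : ι → Type*) :
    (completeMultipartiteGraph P).adjMatrix R =
      ((⊤ : SimpleGraph ι).adjMatrix R).submatrix Sigma.fst Sigma.fst := by
  ext u w
  simp [completeMultipartiteGraph, adjMatrix_apply]

lemma rank_adjMatrix_completeMultipartiteGraph {R : Type*} [CommRing R] [StrongRankCondition R]
    [Fintype ι] [DecidableEq ι] {P : ι → Type*} [∀ i, Fintype (P i)] (hP : ∀ i, Nonempty (P i)) :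
    ((completeMultipartiteGraph P).adjMatrix R).rank = ((⊤ : SimpleGraph ι).adjMatrix R).rank := by
  let σ : ι → Σ i, P i := fun i => ⟨i, Classical.choice (hP i)⟩
  refine le_antisymm ?_ ?_
  · rw [adjMatrix_completeMultipartiteGraph]
    exact rank_submatrix_le _ _ _
  · calc ((⊤ : SimpleGraph ι).adjMatrix R).rank
        = (((completeMultipartiteGraph P).adjMatrix R).submatrix σ σ).rank := by
          rw [adjMatrix_completeMultipartiteGraph, submatrix_submatrix]; rfl
      _ ≤ _ := rank_submatrix_le _ _ _

lemma rank_adjMatrix_top_fin_three : ((⊤ : SimpleGraph (Fin 3)).adjMatrix ℝ).rank = 3 := by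
  have hdet : ((⊤ : SimpleGraph (Fin 3)).adjMatrix ℝ).det ≠ 0 := by
    simp [det_fin_three]
  rw [rank_of_isUnit _ ((isUnit_iff_isUnit_det _).mpr hdet.isUnit), Fintype.card_fin]

end SimpleGraph

theorem stmt_19_general {V : Type*} [Fintype V] (G : SimpleGraph V)
    [DecidableRel G.Adj] (hG : G.Connected) :
    (G.adjMatrix ℝ).rank = 3 ↔
      ∃ a : Fin 3 → ℕ, (∀ i, 0 < a i) ∧
        Nonempty (G ≃g completeMultipartiteGraph fun i => Fin (a i)) := by
  constructor
  · intro hrank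
    obtain ⟨s, hli, hspan⟩ := exists_linearIndependent_rows_spanning hrank
    have hdet : ((G.adjMatrix ℝ).submatrix s s).det ≠ 0 := by
      rw [← isUnit_iff_ne_zero, ← isUnit_iff_isUnit_det, ← linearIndependent_rows_iff_isUnit]
      exact (isSymm_adjMatrix G).linearIndependent_rows_submatrix hli hspan
    have hs := adj_iff_ne_of_det_submatrix_adjMatrix_ne_zero hdet
    have : Nontrivial V := nontrivial_of_ne _ _ ((hs 0 1).2 (by decide)).ne
    choose f hf using fun u => exists_neighborSet_eq_of_mem_span_rows hs (hspan u)
      (hG.preconnected.exists_adj_of_nontrivial u)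
    exact exists_iso_completeMultipartiteGraph_fin (leftInverse_of_neighborSet_eq hs hf).surjective
      (adj_iff_ne_of_neighborSet_eq hs hf)
  · rintro ⟨a, ha, ⟨e⟩⟩
    classical
    rw [e.rank_adjMatrix_eq, rank_adjMatrix_completeMultipartiteGraph
      (fun i => Fin.pos_iff_nonempty.mp (ha i)), rank_adjMatrix_top_fin_three]

/-- A simple connected graph has adjacency matrix rank 3 over `ℝ` if and only if it is a
complete tripartite graph `K_{a,b,c}` with `a, b, c ≥ 1` (equivalently, it is obtained from
`K_3` by multiplication of vertices). -/
theorem stmt_19 {V : Type*} [Fintype V] [DecidableEq V] (G : SimpleGraph V)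
    [DecidableRel G.Adj] (hG : G.Connected) :
    (G.adjMatrix ℝ).rank = 3 ↔
      ∃ a : Fin 3 → ℕ, (∀ i, 0 < a i) ∧
        Nonempty (G ≃g completeMultipartiteGraph fun i => Fin (a i)) :=
  stmt_19_general G hG
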